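/- Branch independence of the construction of F: let α ∈ ℤ and let g : ℝ³ → ℝ³ satisfy (I) g(x + c) = g(x) + α·c for every x ∈ ℝ³ and c ∈ {(4,0,0), (0,4,0)}, and (II) g(R_{(2,2)}(x)) = R_{(2,2)}(g(x)) for every x ∈ ℝ³. Let T(x) = x - (1,1,0). Then for all a, b ∈ ℝ³ with Z(a) = Z(b), one has Z(T(g(T⁻¹(a)))) = Z(T(g(T⁻¹(b)))), where T⁻¹(x) = x + (1,1,0). -/

import Mathlib

/-- Explicit vector in ℝ³ (with the Euclidean norm). -/
def vec3 (a b c : ℝ) : EuclideanSpace ℝ (Fin 3) := !₂[a, b, c]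

/-- The 4-periodic sawtooth: h(t) = t on [-1,1], h(t) = 2 - t on [1,3]. -/
noncomputable def h (t : ℝ) : ℝ := 1 - |4 * Int.fract ((t + 1) / 4) - 2|

/-- The sign function ε(t) = (-1)^⌊(t+1)/2⌋. -/
noncomputable def eps (t : ℝ) : ℝ := (-1 : ℝ) ^ ⌊(t + 1) / 2⌋

/-- The Zorich-type map Z : ℝ³ → ℝ³. -/
noncomputable def Z (x : EuclideanSpace ℝ (Fin 3)) : EuclideanSpace ℝ (Fin 3) :=
  Real.exp (x 2) •
    vec3 (h (x 0)) (h (x 1)) (eps (x 0) * eps (x 1) * (1 - max |h (x 0)| |h (x 1)|))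

/-- Rotation by π about the vertical line {(u,v,t) : t ∈ ℝ}. -/
noncomputable def Rot (u v : ℝ) (x : EuclideanSpace ℝ (Fin 3)) : EuclideanSpace ℝ (Fin 3) :=
  vec3 (2 * u - x 0) (2 * v - x 1) (x 2)

/-! The fibres of `Z` are the orbits of the group generated by the translations by `(4,0,0)`,
`(0,4,0)` and the half-turn `R_{(1,1)}`. Indeed the height is recovered as
`exp x₃ = max (|Z₁|, |Z₂|) + |Z₃|`; the sawtooth `h` then determines each horizontal coordinate
modulo 4 up to the reflection `t ↦ 2 - t`, and the sign `ε(x₁)ε(x₂)` of `Z₃` forces both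
reflections or neither, except where `max (|h x₁|, |h x₂|) = 1`, and there the reflection fixes
the coordinate with `|h| = 1` modulo 4. Conjugation by `T` turns this group into the one generated
by the same translations and `R_{(2,2)}`, whose orbits `g` preserves by (I) and (II). -/

open AddCommGroup

lemma h_periodic : Function.Periodic h 4 := fun t => by
  rw [h, h, show (t + 4 + 1) / 4 = (t + 1) / 4 + 1 by ring, Int.fract_add_one]

lemma eps_periodic : Function.Periodic eps 4 := fun t => by
  rw [eps, eps, show (t + 4 + 1) / 2 = (t + 1) / 2 + (2 : ℤ) by push_cast; ring,
    Int.floor_add_intCast, zpow_add₀ (by norm_num)]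
  norm_num

lemma h_congr {s t : ℝ} (hst : s ≡ t [PMOD 4]) : h s = h t := by
  obtain ⟨k, rfl⟩ := modEq_iff_eq_add_zsmul.mp hst
  exact (h_periodic.zsmul k s).symm

lemma eps_congr {s t : ℝ} (hst : s ≡ t [PMOD 4]) : eps s = eps t := by
  obtain ⟨k, rfl⟩ := modEq_iff_eq_add_zsmul.mp hst
  exact (eps_periodic.zsmul k s).symm

lemma abs_h_le_one (t : ℝ) : |h t| ≤ 1 := by
  have := Int.fract_nonneg ((t + 1) / 4)
  have := Int.fract_lt_one ((t + 1) / 4)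
  have := abs_nonneg (4 * Int.fract ((t + 1) / 4) - 2)
  have : |4 * Int.fract ((t + 1) / 4) - 2| ≤ 2 := abs_le.mpr ⟨by linarith, by linarith⟩
  rw [h, abs_le]
  constructor <;> linarith

lemma h_two_sub (t : ℝ) : h (2 - t) = h t := by
  rw [h, h, show (2 - t + 1) / 4 = -((t + 1) / 4) + 1 by ring, Int.fract_add_one]
  rcases eq_or_ne (Int.fract ((t + 1) / 4)) 0 with h0 | h0
  · rw [Int.fract_neg_eq_zero.mpr h0, h0]
  · rw [Int.fract_neg h0, show 4 * (1 - Int.fract ((t + 1) / 4)) - 2 =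
      -(4 * Int.fract ((t + 1) / 4) - 2) by ring, abs_neg]

lemma modEq_or_two_sub_modEq_of_h_eq {s t : ℝ} (hst : h s = h t) :
    s ≡ t [PMOD 4] ∨ 2 - s ≡ t [PMOD 4] := by
  simp only [modEq_iff_eq_add_zsmul, zsmul_eq_mul]
  have hs := Int.floor_add_fract ((s + 1) / 4)
  have ht := Int.floor_add_fract ((t + 1) / 4)
  have := Int.fract_lt_one ((s + 1) / 4)
  have := Int.fract_nonneg ((t + 1) / 4)
  rw [h, h, sub_right_inj] at hst
  rcases abs_eq_abs.mp hst with hu | hu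
  · exact .inl ⟨⌊(t + 1) / 4⌋ - ⌊(s + 1) / 4⌋, by push_cast; linarith⟩
  · exact .inr ⟨⌊(s + 1) / 4⌋ + ⌊(t + 1) / 4⌋, by push_cast; linarith⟩

lemma abs_h_eq_one_iff {t : ℝ} : |h t| = 1 ↔ t ≡ 2 - t [PMOD 4] := by
  simp only [modEq_iff_eq_add_zsmul, zsmul_eq_mul]
  constructor
  · intro ht
    have hθ := Int.floor_add_fract ((t + 1) / 4)
    have := Int.fract_lt_one ((t + 1) / 4)
    set u := Int.fract ((t + 1) / 4)
    rw [h, abs_sub_comm, abs_eq zero_le_one] at ht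
    rcases ht with hu | hu
    · rcases (abs_eq zero_le_two).mp (by linarith : |4 * u - 2| = 2) with hu | hu
      · linarith
      · exact ⟨1 - 2 * ⌊(t + 1) / 4⌋, by push_cast; linarith⟩
    · have := abs_eq_zero.mp (by linarith : |4 * u - 2| = 0)
      exact ⟨-2 * ⌊(t + 1) / 4⌋, by push_cast; linarith⟩
  · rintro ⟨k, hk⟩
    obtain ⟨j, rfl | rfl⟩ := Int.even_or_odd' k <;> push_cast at hk
    · rw [← h_congr (modEq_iff_eq_add_zsmul.mpr ⟨-j, by rw [zsmul_eq_mul]; push_cast; linarith⟩ :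
        (1 : ℝ) ≡ t [PMOD 4])]
      norm_num [h, Int.fract_eq_self]
    · rw [← h_congr (modEq_iff_eq_add_zsmul.mpr ⟨-j, by rw [zsmul_eq_mul]; push_cast; linarith⟩ :
        (-1 : ℝ) ≡ t [PMOD 4])]
      norm_num [h]

lemma eps_mul_self (t : ℝ) : eps t * eps t = 1 := by
  rw [eps, ← zpow_add₀ (by norm_num), ← two_mul, zpow_mul]
  norm_num

lemma abs_eps (t : ℝ) : |eps t| = 1 := abs_neg_one_zpow _

lemma eps_ne_zero (t : ℝ) : eps t ≠ 0 := left_ne_zero_of_mul_eq_one (eps_mul_self t)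

lemma eps_two_sub {t : ℝ} (ht : |h t| < 1) : eps (2 - t) = -eps t := by
  have hnot : (t + 1) / 2 ∉ Set.range Int.cast := by
    rintro ⟨n, hn⟩
    refine ht.ne (abs_h_eq_one_iff.mpr (modEq_iff_eq_add_zsmul.mpr ⟨1 - n, ?_⟩))
    rw [zsmul_eq_mul]; push_cast; linarith
  rw [eps, eps, show (2 - t + 1) / 2 = -((t + 1) / 2) + (2 : ℤ) by push_cast; ring,
    Int.floor_add_intCast, Int.floor_neg, (Int.ceil_eq_floor_add_one_iff_notMem _).mpr hnot,
    show -(⌊(t + 1) / 2⌋ + 1) + 2 = ⌊(t + 1) / 2⌋ + 1 + 2 * (-⌊(t + 1) / 2⌋) by ring,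
    zpow_add₀ (by norm_num), zpow_add_one₀ (by norm_num), zpow_mul]
  norm_num

lemma modEq_and_two_sub_modEq_of_h_eq {s t : ℝ} (hs : |h s| = 1) (hst : h s = h t) :
    s ≡ t [PMOD 4] ∧ 2 - s ≡ t [PMOD 4] := by
  have hfix := abs_h_eq_one_iff.mp hs
  rcases modEq_or_two_sub_modEq_of_h_eq hst with hst | hst
  exacts [⟨hst, hfix.symm.trans hst⟩, ⟨hfix.trans hst, hst⟩]

lemma modEq_or_two_sub_modEq_of_h_eq_of_sign_eq {s₀ s₁ t₀ t₁ : ℝ} (h₀ : h s₀ = h t₀)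
    (h₁ : h s₁ = h t₁)
    (hε : eps s₀ * eps s₁ * (1 - max |h s₀| |h s₁|) =
      eps t₀ * eps t₁ * (1 - max |h s₀| |h s₁|)) :
    (s₀ ≡ t₀ [PMOD 4] ∧ s₁ ≡ t₁ [PMOD 4]) ∨ (2 - s₀ ≡ t₀ [PMOD 4] ∧ 2 - s₁ ≡ t₁ [PMOD 4]) := by
  rcases (max_le (abs_h_le_one s₀) (abs_h_le_one s₁)).lt_or_eq with hM | hM
  · have hε' := mul_right_cancel₀ (sub_ne_zero.mpr hM.ne') hε
    obtain ⟨hs₀, hs₁⟩ := max_lt_iff.mp hM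
    have hne := mul_ne_zero (eps_ne_zero s₀) (eps_ne_zero s₁)
    rcases modEq_or_two_sub_modEq_of_h_eq h₀ with m₀ | m₀ <;>
      rcases modEq_or_two_sub_modEq_of_h_eq h₁ with m₁ | m₁
    · exact .inl ⟨m₀, m₁⟩
    · rw [← eps_congr m₀, ← eps_congr m₁, eps_two_sub hs₁] at hε'
      exact absurd (by linarith) hne
    · rw [← eps_congr m₀, ← eps_congr m₁, eps_two_sub hs₀] at hε'
      exact absurd (by linarith) hne
    · exact .inr ⟨m₀, m₁⟩
  · rcases max_choice |h s₀| |h s₁| with hc | hc <;> rw [hc] at hM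
    · obtain ⟨m₀, m₀'⟩ := modEq_and_two_sub_modEq_of_h_eq hM h₀
      exact (modEq_or_two_sub_modEq_of_h_eq h₁).imp (⟨m₀, ·⟩) (⟨m₀', ·⟩)
    · obtain ⟨m₁, m₁'⟩ := modEq_and_two_sub_modEq_of_h_eq hM h₁
      exact (modEq_or_two_sub_modEq_of_h_eq h₀).imp (⟨·, m₁⟩) (⟨·, m₁'⟩)

local notation "ℝ³" => EuclideanSpace ℝ (Fin 3)

@[simp] lemma Z_apply_zero (x : ℝ³) : Z x 0 = Real.exp (x 2) * h (x 0) := by simp [Z, vec3]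

@[simp] lemma Z_apply_one (x : ℝ³) : Z x 1 = Real.exp (x 2) * h (x 1) := by simp [Z, vec3]

@[simp] lemma Z_apply_two (x : ℝ³) :
    Z x 2 = Real.exp (x 2) * (eps (x 0) * eps (x 1) * (1 - max |h (x 0)| |h (x 1)|)) := by
  simp [Z, vec3]

lemma exp_eq_max_abs_add_abs (x : ℝ³) : Real.exp (x 2) = max |Z x 0| |Z x 1| + |Z x 2| := by
  have hM : max |h (x 0)| |h (x 1)| ≤ 1 := max_le (abs_h_le_one _) (abs_h_le_one _)
  simp only [Z_apply_zero, Z_apply_one, Z_apply_two, abs_mul, abs_eps, Real.abs_exp, one_mul,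
    ← mul_max_of_nonneg _ _ (Real.exp_pos _).le, abs_of_nonneg (sub_nonneg.mpr hM)]
  ring

lemma Z_Rot_one_one (x : ℝ³) : Z (Rot 1 1 x) = Z x := by
  have hsign : eps (2 - x 0) * eps (2 - x 1) * (1 - max |h (x 0)| |h (x 1)|) =
      eps (x 0) * eps (x 1) * (1 - max |h (x 0)| |h (x 1)|) := by
    rcases (max_le (abs_h_le_one (x 0)) (abs_h_le_one (x 1))).lt_or_eq with hM | hM
    · rw [eps_two_sub (max_lt_iff.mp hM).1, eps_two_sub (max_lt_iff.mp hM).2]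
      ring
    · rw [hM, sub_self, mul_zero, mul_zero]
  ext i
  fin_cases i <;> simp [Rot, vec3, h_two_sub, hsign]

def periodLattice : AddSubgroup ℝ³ := AddSubgroup.closure {vec3 4 0 0, vec3 0 4 0}

lemma map_add_of_mem_closure {G H : Type*} [AddGroup G] [AddGroup H] {f : G → H} (φ : G →+ H)
    {S : Set G} (hf : ∀ x, ∀ c ∈ S, f (x + c) = f x + φ c) {v : G}
    (hv : v ∈ AddSubgroup.closure S) (x : G) : f (x + v) = f x + φ v := by
  induction hv using AddSubgroup.closure_induction generalizing x with
  | mem c hc => exact hf x c hc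
  | zero => simp
  | add u w _ _ hu hw => rw [← add_assoc, hw, hu, add_assoc, map_add]
  | neg u _ hu =>
    rw [map_neg, ← sub_eq_add_neg, ← sub_eq_add_neg, eq_sub_iff_add_eq, ← hu, sub_add_cancel]

lemma Z_add_mem_periodLattice {v : ℝ³} (hv : v ∈ periodLattice) (x : ℝ³) : Z (x + v) = Z x := by
  simpa using map_add_of_mem_closure (f := Z) 0 (fun y c hc => by
    rcases hc with rfl | rfl <;> ext i <;> fin_cases i <;>
      simp [vec3, h_periodic _, eps_periodic _]) hv x

lemma sub_mem_periodLattice_of_modEq {x y : ℝ³} (h₀ : x 0 ≡ y 0 [PMOD 4])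
    (h₁ : x 1 ≡ y 1 [PMOD 4]) (h₂ : x 2 = y 2) : y - x ∈ periodLattice := by
  obtain ⟨k, hk⟩ := modEq_iff_eq_add_zsmul.mp h₀
  obtain ⟨l, hl⟩ := modEq_iff_eq_add_zsmul.mp h₁
  have hv : y - x = k • vec3 4 0 0 + l • vec3 0 4 0 := by
    ext i; fin_cases i <;> simp [vec3, hk, hl, h₂]
  rw [hv]
  exact add_mem (zsmul_mem (AddSubgroup.subset_closure (by simp)) k)
    (zsmul_mem (AddSubgroup.subset_closure (by simp)) l)

/-- `b` lies in the orbit of `a` under the group generated by the translations in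
`periodLattice` and the half-turn `Rot c c`. -/
def DeckRel (c : ℝ) (a b : ℝ³) : Prop :=
  ∃ v ∈ periodLattice, b = a + v ∨ b = Rot c c a + v

lemma Rot_add_vec3 (u v p q : ℝ) (x : ℝ³) :
    Rot u v x + vec3 p q 0 = Rot (u + p) (v + q) (x + vec3 p q 0) := by
  ext i; fin_cases i <;> simp [Rot, vec3] <;> ring

lemma deckRel_add_vec3_iff {c d : ℝ} {a b : ℝ³} :
    DeckRel (c + d) (a + vec3 d d 0) (b + vec3 d d 0) ↔ DeckRel c a b := by
  simp only [DeckRel, ← Rot_add_vec3, add_right_comm _ (vec3 d d 0), add_left_inj]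

lemma DeckRel.map {α : ℤ} {c : ℝ} {g : ℝ³ → ℝ³}
    (hI : ∀ x, ∀ v ∈ ({vec3 4 0 0, vec3 0 4 0} : Set ℝ³), g (x + v) = g x + (α : ℝ) • v)
    (hII : ∀ x, g (Rot c c x) = Rot c c (g x)) {a b : ℝ³} (hab : DeckRel c a b) :
    DeckRel c (g a) (g b) := by
  obtain ⟨v, hv, rfl | rfl⟩ := hab
  all_goals
    refine ⟨(α : ℝ) • v, Int.cast_smul_eq_zsmul ℝ α v ▸ zsmul_mem hv α, ?_⟩
    rw [map_add_of_mem_closure (DistribSMul.toAddMonoidHom ℝ³ (α : ℝ)) hI hv]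
  · exact .inl rfl
  · exact .inr (by rw [hII]; rfl)

lemma Z_eq_Z_iff {a b : ℝ³} : Z a = Z b ↔ DeckRel 1 a b := by
  constructor
  · intro hab
    have h₂ : a 2 = b 2 := Real.exp_injective <| by
      rw [exp_eq_max_abs_add_abs, exp_eq_max_abs_add_abs, hab]
    have hZ (i : Fin 3) : Z a i = Z b i := by rw [hab]
    have h₀ : h (a 0) = h (b 0) := by simpa [h₂] using hZ 0
    have h₁ : h (a 1) = h (b 1) := by simpa [h₂] using hZ 1
    have hε := hZ 2
    rw [Z_apply_two, Z_apply_two, h₂, ← h₀, ← h₁] at hε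
    rcases modEq_or_two_sub_modEq_of_h_eq_of_sign_eq h₀ h₁
      (mul_left_cancel₀ (Real.exp_ne_zero _) hε) with ⟨m₀, m₁⟩ | ⟨m₀, m₁⟩
    · exact ⟨_, sub_mem_periodLattice_of_modEq m₀ m₁ h₂, .inl (add_sub_cancel _ _).symm⟩
    · refine ⟨_, sub_mem_periodLattice_of_modEq (x := Rot 1 1 a) ?_ ?_ h₂,
        .inr (add_sub_cancel _ _).symm⟩ <;> simpa [Rot, vec3]
  · rintro ⟨v, hv, rfl | rfl⟩
    · exact (Z_add_mem_periodLattice hv a).symm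
    · rw [Z_add_mem_periodLattice hv, Z_Rot_one_one]

/-- Branch independence of the construction of F: if g satisfies (I) and (II),
    and T(x) = x - (1,1,0), then Z ∘ T ∘ g ∘ T⁻¹ takes the same value at any
    two points a, b with Z(a) = Z(b). -/
theorem branch_independence (α : ℤ) (g : EuclideanSpace ℝ (Fin 3) → EuclideanSpace ℝ (Fin 3))
    (hI : ∀ x : EuclideanSpace ℝ (Fin 3),
      ∀ c ∈ ({vec3 4 0 0, vec3 0 4 0} : Set (EuclideanSpace ℝ (Fin 3))),
        g (x + c) = g x + (α : ℝ) • c)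
    (hII : ∀ x : EuclideanSpace ℝ (Fin 3), g (Rot 2 2 x) = Rot 2 2 (g x))
    (a b : EuclideanSpace ℝ (Fin 3)) (hab : Z a = Z b) :
    Z (g (a + vec3 1 1 0) - vec3 1 1 0) = Z (g (b + vec3 1 1 0) - vec3 1 1 0) := by
  have hshift : DeckRel (1 + 1) (a + vec3 1 1 0) (b + vec3 1 1 0) :=
    deckRel_add_vec3_iff.mpr (Z_eq_Z_iff.mp hab)
  rw [one_add_one_eq_two] at hshift
  rw [Z_eq_Z_iff, ← deckRel_add_vec3_iff (d := 1), sub_add_cancel, sub_add_cancel,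
    one_add_one_eq_two]
  exact hshift.map hI hII
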